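/- Let a₁, a₂ ∈ K with v_K(a₁) = v_K(a₂) = −1, and for i = 1, 2 let Lᵢ = K(xᵢ) where xᵢ is a root of X^p − X − aᵢ in a fixed algebraic closure of K, and suppose each Lᵢ/K is cyclic of degree p. If v_K(a₁ − a₂) ≥ 1, then L₁ = L₂ (as subfields of the fixed algebraic closure); in particular L₁ contains a root of X^p − X − a₂. -/

import Mathlib

/-!
On `L = K(x₁)`, with basis `1, x₁, …, x₁^(p-1)`, put `w (∑ cᵢ x₁ⁱ) = minᵢ (v cᵢ - i/p)`.
Since `x₁^p = x₁ + a₁` with `v a₁ = -1`, this gives `w (x y) ≥ w x + w y`, and `L` is complete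
for `w` because `K` is. A root of `X^p - X - a₂` of the form `x₁ + t` is a fixed point of
`t ↦ (t + x₁)^p - x₁^p + (a₁ - a₂)`; as `p ∣ C(p, k)` for `0 < k < p` and `w x₁ = -1/p`, this
map is a `1/p`-contraction of the ball `w ≥ 1`, which it preserves because `v (a₁ - a₂) ≥ 1`.
Its fixed point gives a root `y ∈ L`. As `[K(x₂) : K] = p`, `X^p - X - a₂` is the minimal
polynomial of `x₂`, so `y` and `x₂` are conjugate, and normality of `L` puts `x₂` in `L`.
-/

open Polynomial

universe u v w

/-- An additive `ℚ`-valued valuation on a field `K`, specified by its values on the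
nonzero elements (the value at `0` is irrelevant and unconstrained). -/
structure AddVal (K : Type u) [Field K] where
  v : K → ℚ
  v_mul : ∀ x y : K, x ≠ 0 → y ≠ 0 → v (x * y) = v x + v y
  v_add : ∀ x y : K, x ≠ 0 → y ≠ 0 → x + y ≠ 0 → min (v x) (v y) ≤ v (x + y)

namespace AddVal

variable {K : Type u} [Field K]

/-- The value group of the valuation is exactly `(1/e)·ℤ`.  (For `e = 1` this says the
valuation is a normalized discrete valuation; for an extension of a normalized base field
it says the ramification index is `e`.) -/
def HasIndex (V : AddVal K) (e : ℕ) : Prop :=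
  (∀ x : K, x ≠ 0 → ∃ n : ℤ, V.v x = (n : ℚ) / (e : ℚ)) ∧
    ∃ x : K, x ≠ 0 ∧ V.v x = 1 / (e : ℚ)

/-- Completeness: every Cauchy sequence for the valuation converges. -/
def IsComplete (V : AddVal K) : Prop :=
  ∀ f : ℕ → K,
    (∀ C : ℚ, ∃ N : ℕ, ∀ m n : ℕ, N ≤ m → N ≤ n → f m = f n ∨ C ≤ V.v (f m - f n)) →
      ∃ a : K, ∀ C : ℚ, ∃ N : ℕ, ∀ n : ℕ, N ≤ n → f n = a ∨ C ≤ V.v (f n - a)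

/-- `x` lies in the valuation ring `O_K`. -/
def Integer (V : AddVal K) (x : K) : Prop := x = 0 ∨ 0 ≤ V.v x

end AddVal

/-- Data exhibiting the field `k` as the residue field of `(K, V)`: a reduction map `ρ`,
additive and multiplicative on the valuation ring, surjective onto `k`, and whose kernel
(on the valuation ring) is exactly the maximal ideal `{x : v x ≥ 1}`. -/
structure ResidueData {K : Type u} [Field K] (V : AddVal K) (k : Type v) [Field k] where
  ρ : K → k
  ρ_one : ρ 1 = 1
  ρ_add : ∀ x y : K, V.Integer x → V.Integer y → ρ (x + y) = ρ x + ρ y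
  ρ_mul : ∀ x y : K, V.Integer x → V.Integer y → ρ (x * y) = ρ x * ρ y
  ρ_surj : ∀ c : k, ∃ x : K, V.Integer x ∧ ρ x = c
  ρ_zero : ∀ x : K, V.Integer x → (ρ x = 0 ↔ x = 0 ∨ 1 ≤ V.v x)

/-- A finite extension `L` of a complete discretely valued field `(K, V)` (with `V`
normalized, i.e. of value group `ℤ`) is totally ramified iff the (unique) extension of
the valuation to `L` has value group `(1/[L:K])·ℤ`. -/
def IsTotallyRamifiedExt (K : Type u) (L : Type w) [Field K] [Field L] [Algebra K L]
    (V : AddVal K) : Prop :=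
  ∃ W : AddVal L, (∀ x : K, x ≠ 0 → W.v (algebraMap K L x) = V.v x) ∧
    W.HasIndex (Module.finrank K L)

/-- Data exhibiting the residue field extension attached to an extension `L/K` of valued
fields together with residue fields `k` of `K` and `l` of `L` and the induced embedding
`σ : k → l`; the field `sep` states that the residue extension `l/k` is separable
(every element of `l` is a root of a separable polynomial over `k`). -/
structure SeparableResidueExtension {K : Type u} {L : Type w} [Field K] [Field L]
    [Algebra K L] {k : Type v} [Field k] (V : AddVal K) (Rk : ResidueData V k)
    (W : AddVal L) : Type (max u (v + 1) w) where
  l : Type v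
  [fl : Field l]
  Rl : ResidueData W l
  σ : k →+* l
  compat : ∀ x : K, V.Integer x → σ (Rk.ρ x) = Rl.ρ (algebraMap K L x)
  sep : ∀ c : l, ∃ f : Polynomial k, f ≠ 0 ∧ f.Separable ∧ Polynomial.eval₂ σ c f = 0

/-- An extension `L` of a complete absolutely unramified discretely valued field `(K, V)`
(with residue field `(k, Rk)`) is unramified iff the (unique) extension of the valuation
to `L` still has value group `ℤ` and the residue field extension is separable. -/
def IsUnramifiedExt (K : Type u) (L : Type w) [Field K] [Field L] [Algebra K L]
    (V : AddVal K) {k : Type v} [Field k] (Rk : ResidueData V k) : Prop :=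
  ∃ W : AddVal L, (∀ x : K, x ≠ 0 → W.v (algebraMap K L x) = V.v x) ∧
    W.HasIndex 1 ∧ Nonempty (SeparableResidueExtension V Rk W)

namespace AddVal

variable {K : Type u} [Field K] (V : AddVal K)

theorem v_one : V.v 1 = 0 := by
  have := V.v_mul 1 1 one_ne_zero one_ne_zero
  rw [mul_one] at this
  linarith

theorem v_neg {x : K} (hx : x ≠ 0) : V.v (-x) = V.v x := by
  have h := V.v_mul (-1) (-1) (by norm_num) (by norm_num)
  rw [neg_one_mul, neg_neg, v_one] at h
  rw [← neg_one_mul, V.v_mul (-1) x (by norm_num) hx]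
  linarith

/-- `{x | v x ≥ C}`, with `0` added by hand since `v 0` is junk. -/
def ball (C : ℚ) : AddSubgroup K where
  carrier := {x | x = 0 ∨ C ≤ V.v x}
  zero_mem' := Or.inl rfl
  add_mem' {x y} hx hy := by
    by_cases hx0 : x = 0
    · simpa [hx0] using hy
    by_cases hy0 : y = 0
    · simpa [hy0] using hx
    by_cases hxy : x + y = 0
    · exact Or.inl hxy
    exact Or.inr <| (le_min (hx.resolve_left hx0) (hy.resolve_left hy0)).trans
      (V.v_add x y hx0 hy0 hxy)
  neg_mem' {x} hx := by
    rcases hx with hx | hx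
    · exact Or.inl (by simp [hx])
    · by_cases hx0 : x = 0
      · exact Or.inl (by simp [hx0])
      · exact Or.inr (by rwa [V.v_neg hx0])

variable {V}

theorem ball_antitone : Antitone V.ball := fun _ _ hCD _ hx =>
  hx.imp_right hCD.trans

theorem mul_mem_ball {C D : ℚ} {x y : K} (hx : x ∈ V.ball C) (hy : y ∈ V.ball D) :
    x * y ∈ V.ball (C + D) := by
  by_cases hx0 : x = 0
  · simp [hx0]
  by_cases hy0 : y = 0
  · simp [hy0]
  exact Or.inr (by
    rw [V.v_mul x y hx0 hy0]
    linarith [hx.resolve_left hx0, hy.resolve_left hy0])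

theorem one_mem_ball : (1 : K) ∈ V.ball 0 := Or.inr V.v_one.ge

theorem natCast_mem_ball (n : ℕ) : (n : K) ∈ V.ball 0 := by
  induction n with
  | zero => simp
  | succ n ih => exact_mod_cast add_mem ih one_mem_ball

theorem choose_mem_ball {p k : ℕ} (hp : p.Prime) (hpv : (p : K) ∈ V.ball 1) (hk0 : k ≠ 0)
    (hkp : k < p) : (p.choose k : K) ∈ V.ball 1 := by
  obtain ⟨r, hr⟩ := hp.dvd_choose_self hk0 hkp
  simpa [hr] using mul_mem_ball hpv (natCast_mem_ball r)

theorem eq_zero_of_forall_mem_ball {x : K} (hx : ∀ C, x ∈ V.ball C) : x = 0 :=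
  (hx (V.v x + 1)).resolve_right (by linarith)

end AddVal

section Filtration

variable {G : Type*} [AddCommGroup G]

def FiltrationCauchySeq (B : ℚ → AddSubgroup G) (f : ℕ → G) : Prop :=
  ∀ C, ∃ N, ∀ m n, N ≤ m → N ≤ n → f m - f n ∈ B C

def FiltrationTendsto (B : ℚ → AddSubgroup G) (f : ℕ → G) (a : G) : Prop :=
  ∀ C, ∃ N, ∀ n, N ≤ n → f n - a ∈ B C

def FiltrationComplete (B : ℚ → AddSubgroup G) : Prop :=
  ∀ f, FiltrationCauchySeq B f → ∃ a, FiltrationTendsto B f a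

theorem AddVal.IsComplete.filtrationComplete {K : Type u} [Field K] {V : AddVal K}
    (hV : V.IsComplete) : FiltrationComplete V.ball := fun f hf => by
  obtain ⟨a, ha⟩ := hV f fun C => by
    obtain ⟨N, hN⟩ := hf C
    exact ⟨N, fun m n hm hn => (hN m n hm hn).imp_left sub_eq_zero.1⟩
  refine ⟨a, fun C => ?_⟩
  obtain ⟨N, hN⟩ := ha C
  exact ⟨N, fun n hn => (hN n hn).imp_left sub_eq_zero.2⟩

variable {B : ℚ → AddSubgroup G}

theorem filtrationCauchySeq_of_sub_succ_mem (hB : Antitone B) {f : ℕ → G} {D δ : ℚ}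
    (hδ : 0 < δ) (hf : ∀ n : ℕ, f (n + 1) - f n ∈ B (D + n * δ)) : FiltrationCauchySeq B f := by
  have hsub : ∀ n m : ℕ, n ≤ m → f m - f n ∈ B (D + n * δ) := by
    intro n m hnm
    induction m, hnm using Nat.le_induction with
    | base => simp
    | succ m hnm ih =>
      have hstep : f (m + 1) - f m ∈ B (D + n * δ) := hB (by gcongr) (hf m)
      simpa using add_mem hstep ih
  intro C
  obtain ⟨N, hN⟩ := exists_nat_ge ((C - D) / δ)
  have hC : ∀ n, N ≤ n → C ≤ D + n * δ := fun n hn => by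
    have : (C - D) / δ ≤ n := hN.trans (by exact_mod_cast hn)
    rw [div_le_iff₀ hδ] at this
    linarith
  refine ⟨N, fun m n hm hn => ?_⟩
  rcases le_total n m with hnm | hmn
  · exact hB (hC n hn) (hsub n m hnm)
  · simpa using neg_mem (hB (hC m hm) (hsub m n hmn))

theorem FiltrationComplete.exists_fixedPoint (hcomp : FiltrationComplete B) (hB : Antitone B)
    (hsep : ∀ z, (∀ C, z ∈ B C) → z = 0) {D₀ δ : ℚ} (hδ : 0 < δ) {Φ : G → G}
    (hΦ0 : Φ 0 ∈ B D₀)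
    (hΦ : ∀ s ∈ B D₀, ∀ t ∈ B D₀, ∀ D, s - t ∈ B D → Φ s - Φ t ∈ B (D + δ)) :
    ∃ t ∈ B D₀, Φ t = t := by
  have hmaps : ∀ t ∈ B D₀, Φ t ∈ B D₀ := fun t ht => by
    have := hB (by linarith) (hΦ t ht 0 (zero_mem _) D₀ (by simpa using ht))
    simpa using add_mem this hΦ0
  set f : ℕ → G := fun n => Φ^[n] 0
  have hf_succ : ∀ n, f (n + 1) = Φ (f n) := fun n => Function.iterate_succ_apply' Φ n 0
  have hf_mem : ∀ n, f n ∈ B D₀ := fun n => by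
    induction n with
    | zero => exact zero_mem _
    | succ n ih => rw [hf_succ]; exact hmaps _ ih
  have hf_step : ∀ n : ℕ, f (n + 1) - f n ∈ B (D₀ + n * δ) := fun n => by
    induction n with
    | zero => simpa [hf_succ, f] using hΦ0
    | succ n ih =>
      have h := hΦ _ (hf_mem (n + 1)) _ (hf_mem n) _ ih
      rw [← hf_succ, ← hf_succ] at h
      convert h using 2
      push_cast; ring
  obtain ⟨t, ht⟩ := hcomp f (filtrationCauchySeq_of_sub_succ_mem hB hδ hf_step)
  have ht_mem : t ∈ B D₀ := by
    obtain ⟨N, hN⟩ := ht D₀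
    simpa using sub_mem (hf_mem N) (hN N le_rfl)
  refine ⟨t, ht_mem, sub_eq_zero.1 (hsep _ fun C => ?_)⟩
  obtain ⟨N, hN⟩ := ht C
  have hnear : Φ t - Φ (f N) ∈ B C :=
    hB (by linarith) (hΦ _ ht_mem _ (hf_mem N) C (by simpa using neg_mem (hN N le_rfl)))
  have hsplit : Φ t - t = (Φ t - Φ (f N)) + (f (N + 1) - t) := by rw [hf_succ]; abel
  rw [hsplit]
  exact add_mem hnear (hN (N + 1) N.le_succ)

end Filtration

namespace AddVal

variable {K : Type u} {L : Type w} [Field K] [Field L] [Algebra K L] {V : AddVal K}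
  {p : ℕ} (b : Module.Basis (Fin p) K L)

variable (V) in
/-- `{z | w z ≥ C}` for `w (∑ cᵢ bᵢ) = minᵢ (v cᵢ - i/p)`. -/
noncomputable def basisBall (C : ℚ) : AddSubgroup L :=
  ⨅ i : Fin p, (V.ball (C + (i : ℕ) / p)).comap (b.coord i).toAddMonoidHom

theorem mem_basisBall {C : ℚ} {z : L} :
    z ∈ V.basisBall b C ↔ ∀ i : Fin p, b.repr z i ∈ V.ball (C + (i : ℕ) / p) := by
  simp [basisBall, AddSubgroup.mem_iInf]

theorem basisBall_antitone : Antitone (V.basisBall b) := fun _ _ hCD _ hz =>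
  (mem_basisBall b).2 fun i => ball_antitone (by linarith) ((mem_basisBall b).1 hz i)

theorem smul_mem_basisBall {C D : ℚ} {c : K} {z : L} (hc : c ∈ V.ball D)
    (hz : z ∈ V.basisBall b C) : c • z ∈ V.basisBall b (D + C) := by
  refine (mem_basisBall b).2 fun i => ?_
  simpa [add_assoc] using mul_mem_ball hc ((mem_basisBall b).1 hz i)

theorem basis_mem_basisBall (i : Fin p) : b i ∈ V.basisBall b (-((i : ℕ) / p)) := by
  refine (mem_basisBall b).2 fun j => ?_
  rw [b.repr_self, Finsupp.single_apply]
  split_ifs with hij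
  · subst hij
    convert one_mem_ball using 2
    ring
  · exact zero_mem _

theorem eq_zero_of_forall_mem_basisBall {z : L} (hz : ∀ C, z ∈ V.basisBall b C) : z = 0 :=
  b.forall_coord_eq_zero_iff.1 fun i => eq_zero_of_forall_mem_ball fun C => by
    simpa using (mem_basisBall b).1 (hz (C - (i : ℕ) / p)) i

theorem IsComplete.filtrationComplete_basisBall (hV : V.IsComplete) :
    FiltrationComplete (V.basisBall b) := fun f hf => by
  have hcoord : ∀ i : Fin p, ∃ c, FiltrationTendsto V.ball (fun n => b.repr (f n) i) c := fun i =>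
    hV.filtrationComplete _ fun C => by
      obtain ⟨N, hN⟩ := hf (C - (i : ℕ) / p)
      exact ⟨N, fun m n hm hn => by
        simpa using (mem_basisBall b).1 (hN m n hm hn) i⟩
  choose c hc using hcoord
  refine ⟨∑ i, c i • b i, fun C => ?_⟩
  choose N hN using fun i : Fin p => hc i (C + (i : ℕ) / p)
  refine ⟨Finset.univ.sup N, fun n hn => (mem_basisBall b).2 fun i => ?_⟩
  rw [map_sub, Finsupp.sub_apply, b.repr_sum_self]
  exact hN i n ((Finset.le_sup (Finset.mem_univ i)).trans hn)

variable {b} {g : L} {a : K}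

theorem pow_mem_basisBall_of_lt (hb : ∀ i, b i = g ^ (i : ℕ)) {m : ℕ} (hm : m < p) :
    g ^ m ∈ V.basisBall b (-((m : ℚ) / p)) :=
  hb ⟨m, hm⟩ ▸ basis_mem_basisBall b ⟨m, hm⟩

theorem one_mem_basisBall (hb : ∀ i, b i = g ^ (i : ℕ)) : (1 : L) ∈ V.basisBall b 0 := by
  have hp : 0 < p := Fin.pos_iff_nonempty.2 b.index_nonempty
  simpa using pow_mem_basisBall_of_lt hb hp

theorem algebraMap_mem_basisBall (hb : ∀ i, b i = g ^ (i : ℕ)) {D : ℚ} {c : K}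
    (hc : c ∈ V.ball D) : algebraMap K L c ∈ V.basisBall b D := by
  simpa [Algebra.algebraMap_eq_smul_one] using smul_mem_basisBall b hc (one_mem_basisBall hb)

/-- The reduction `g^(p+k) = a gᵏ + g^(k+1)` keeps `w (gᵐ) ≥ -m/p` up to `m = 2p - 2`. -/
theorem pow_mem_basisBall (hb : ∀ i, b i = g ^ (i : ℕ))
    (hg : g ^ p - g = algebraMap K L a) (ha : a ∈ V.ball (-1)) {m : ℕ}
    (hm : m + 1 < 2 * p) :
    g ^ m ∈ V.basisBall b (-((m : ℚ) / p)) := by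
  rcases lt_or_ge m p with hmp | hmp
  · exact pow_mem_basisBall_of_lt hb hmp
  obtain ⟨k, rfl⟩ := Nat.exists_eq_add_of_le hmp
  have hp : (0 : ℚ) < p := by exact_mod_cast (show 0 < p by omega)
  have hsplit : g ^ (p + k) = a • g ^ k + g ^ (k + 1) := by
    rw [Algebra.smul_def, ← hg]; ring
  have hlevel : -(((p + k : ℕ) : ℚ) / p) = -1 + -((k : ℚ) / p) := by
    field_simp; push_cast; ring
  rw [hsplit, hlevel]
  refine add_mem (smul_mem_basisBall b ha (pow_mem_basisBall_of_lt hb (by omega))) ?_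
  refine basisBall_antitone b ?_ (pow_mem_basisBall_of_lt hb (by omega))
  rw [← hlevel, neg_le_neg_iff]
  exact div_le_div_of_nonneg_right (by exact_mod_cast (show k + 1 ≤ p + k by omega)) hp.le

theorem mul_mem_basisBall (hb : ∀ i, b i = g ^ (i : ℕ))
    (hg : g ^ p - g = algebraMap K L a) (ha : a ∈ V.ball (-1))
    {C D : ℚ} {x y : L} (hx : x ∈ V.basisBall b C) (hy : y ∈ V.basisBall b D) :
    x * y ∈ V.basisBall b (C + D) := by
  rw [← b.sum_repr x, ← b.sum_repr y, Finset.sum_mul_sum]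
  refine sum_mem fun i _ => sum_mem fun j _ => ?_
  have hcoef := mul_mem_ball ((mem_basisBall b).1 hx i) ((mem_basisBall b).1 hy j)
  have hpow := pow_mem_basisBall hb hg ha (m := (i : ℕ) + j) (by omega)
  rw [hb, hb, smul_mul_smul_comm, ← pow_add]
  convert smul_mem_basisBall b hcoef hpow using 2
  push_cast; ring

theorem pow_mem_basisBall_of_mem (hb : ∀ i, b i = g ^ (i : ℕ))
    (hg : g ^ p - g = algebraMap K L a) (ha : a ∈ V.ball (-1))
    {C : ℚ} {z : L} (hz : z ∈ V.basisBall b C) (n : ℕ) :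
    z ^ n ∈ V.basisBall b (n * C) := by
  induction n with
  | zero => simpa using one_mem_basisBall hb
  | succ n ih =>
    rw [pow_succ]
    convert mul_mem_basisBall hb hg ha ih hz using 2
    push_cast; ring

theorem add_pow_sub_pow_mem_basisBall (hp : p.Prime) (hpv : (p : K) ∈ V.ball 1)
    (hb : ∀ i, b i = g ^ (i : ℕ)) (hg : g ^ p - g = algebraMap K L a) (ha : a ∈ V.ball (-1))
    {u h : L} {D : ℚ} (hu : u ∈ V.basisBall b (-(1 / p))) (h1 : h ∈ V.basisBall b 1)
    (hD : h ∈ V.basisBall b D) : (h + u) ^ p - u ^ p ∈ V.basisBall b (D + 1 / p) := by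
  have hp0 : (0 : ℚ) < p := by exact_mod_cast hp.pos
  have hp2 : (2 : ℚ) ≤ p := by exact_mod_cast hp.two_le
  rw [add_pow, Finset.sum_range_succ']
  simp only [pow_zero, one_mul, Nat.sub_zero, Nat.choose_zero_right, Nat.cast_one, mul_one,
    add_sub_cancel_right]
  refine sum_mem fun k hk => ?_
  have hkp : k + 1 ≤ p := Finset.mem_range.1 hk
  have hhk : h ^ (k + 1) ∈ V.basisBall b (D + k * 1) := by
    rw [pow_succ']
    exact mul_mem_basisBall hb hg ha hD (pow_mem_basisBall_of_mem hb hg ha h1 k)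
  have huk := pow_mem_basisBall_of_mem hb hg ha hu (p - (k + 1))
  have hprod := mul_mem_basisBall hb hg ha hhk huk
  have hcast : ((p - (k + 1) : ℕ) : ℚ) = p - k - 1 := by push_cast [Nat.cast_sub hkp]; ring
  rcases hkp.lt_or_eq with hkp | hkp
  · have hchoose := algebraMap_mem_basisBall hb (choose_mem_ball hp hpv k.succ_ne_zero hkp)
    rw [map_natCast] at hchoose
    refine basisBall_antitone b ?_ (mul_mem_basisBall hb hg ha hprod hchoose)
    rw [hcast]
    field_simp
    nlinarith [(Nat.cast_nonneg k : (0 : ℚ) ≤ k)]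
  · rw [show p.choose (k + 1) = 1 by rw [hkp, Nat.choose_self], Nat.cast_one, mul_one]
    refine basisBall_antitone b ?_ hprod
    have hk : (k : ℚ) = p - 1 := by rw [← hkp]; push_cast; ring
    rw [hcast, hk, show (p : ℚ) - (p - 1) - 1 = 0 by ring, zero_mul, add_zero]
    have : 1 / (p : ℚ) ≤ 1 := by rw [div_le_one hp0]; linarith
    linarith

theorem exists_pow_sub_self_eq (hV : V.IsComplete) (hp : p.Prime) (hpv : (p : K) ∈ V.ball 1)
    (hb : ∀ i, b i = g ^ (i : ℕ)) (hg : g ^ p - g = algebraMap K L a) (ha : a ∈ V.ball (-1))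
    {a' : K} (hclose : a - a' ∈ V.ball 1) : ∃ y : L, y ^ p - y = algebraMap K L a' := by
  have hp0 : (0 : ℚ) < p := by exact_mod_cast hp.pos
  have hgb : g ∈ V.basisBall b (-(1 / p)) := by
    simpa using pow_mem_basisBall_of_lt hb hp.one_lt
  have hnear : ∀ t ∈ V.basisBall b 1, t + g ∈ V.basisBall b (-(1 / p)) := fun t ht =>
    add_mem (basisBall_antitone b (by linarith [one_div_pos.2 hp0]) ht) hgb
  obtain ⟨t, -, ht⟩ := (hV.filtrationComplete_basisBall b).exists_fixedPoint
    (basisBall_antitone b) (fun z => eq_zero_of_forall_mem_basisBall b)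
    (δ := 1 / p) (by positivity) (D₀ := 1)
    (Φ := fun t => (t + g) ^ p - g ^ p + algebraMap K L (a - a'))
    (by simpa using algebraMap_mem_basisBall hb hclose)
    (fun s hs t ht D hD => by
      have key := add_pow_sub_pow_mem_basisBall hp hpv hb hg ha (hnear t ht)
        (sub_mem hs ht) hD
      rw [show s - t + (t + g) = s + g by abel] at key
      convert key using 1
      ring)
  refine ⟨t + g, ?_⟩
  rw [map_sub] at ht
  linear_combination ht + hg

end AddVal

namespace Polynomial

variable {R : Type*} [CommRing R] [Nontrivial R] {p : ℕ}

theorem monic_X_pow_sub_X_sub_C (hp : 1 < p) (a : R) : (X ^ p - X - C a).Monic := by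
  rw [sub_sub]
  refine monic_X_pow_sub ((degree_add_le _ _).trans_lt (max_lt ?_ ?_))
  · rw [degree_X]; exact_mod_cast hp
  · exact degree_C_le.trans_lt (by exact_mod_cast (by omega : 0 < p))

theorem natDegree_X_pow_sub_X_sub_C (hp : 1 < p) (a : R) : (X ^ p - X - C a).natDegree = p := by
  rw [sub_sub, natDegree_sub_eq_left_of_natDegree_lt] <;>
    simp only [natDegree_X_pow]
  exact (natDegree_add_le _ _).trans_lt (by simpa using hp)

end Polynomial

section FieldTheory

open IntermediateField

variable {F E : Type*} [Field F] [Field E] [Algebra F E]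

theorem minpoly_eq_of_finrank_adjoin_eq {x : E} {f : F[X]} (hf : f.Monic) (hfx : aeval x f = 0)
    (hdeg : Module.finrank F F⟮x⟯ = f.natDegree) : minpoly F x = f :=
  (eq_of_monic_of_dvd_of_natDegree_le (minpoly.monic ⟨f, hf, hfx⟩) hf (minpoly.dvd F x hfx)
    (by rw [← adjoin.finrank ⟨f, hf, hfx⟩, hdeg])).symm

theorem IntermediateField.mem_of_isConjRoot [Normal F E] {M : IntermediateField F E} [Normal F M]
    {x y : E} (hy : y ∈ M) (h : IsConjRoot F x y) : x ∈ M := by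
  obtain ⟨σ, rfl⟩ := h.exists_algEquiv
  exact normal_iff_forall_map_le'.1 ‹_› σ ⟨y, hy, rfl⟩

theorem exists_mem_adjoin_pow_sub_self_eq {V : AddVal F} (hV : V.IsComplete) {p : ℕ}
    (hp : p.Prime) (hpv : (p : F) ∈ V.ball 1) {x : E} {a a' : F}
    (hx : x ^ p - x = algebraMap F E a) (hdeg : Module.finrank F F⟮x⟯ = p)
    (ha : a ∈ V.ball (-1)) (hclose : a - a' ∈ V.ball 1) :
    ∃ y ∈ F⟮x⟯, y ^ p - y = algebraMap F E a' := by
  have hint : IsIntegral F x := ⟨_, monic_X_pow_sub_X_sub_C hp.one_lt a, by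
    rw [← aeval_def]; simp [hx]⟩
  let pb := adjoin.powerBasis hint
  have hdim : pb.dim = p := pb.finrank.symm.trans hdeg
  have hgen : pb.gen ^ p - pb.gen = algebraMap F F⟮x⟯ a := Subtype.ext (by simpa [pb] using hx)
  obtain ⟨y, hy⟩ := AddVal.exists_pow_sub_self_eq hV hp hpv
    (b := pb.basis.reindex (finCongr hdim)) (fun i => by simp) hgen ha hclose
  exact ⟨y, y.2, by simpa using congrArg Subtype.val hy⟩

end FieldTheory

open IntermediateField in
theorem statement1_general (p : ℕ) (hp : p.Prime)
    (K : Type u) [Field K]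
    (V : AddVal K) (habs : V.v (p : K) = 1) (hcomp : V.IsComplete)
    (a₁ a₂ : K) (ha₁ : V.v a₁ = -1)
    (x₁ x₂ : AlgebraicClosure K)
    (hx₁ : x₁ ^ p - x₁ = algebraMap K (AlgebraicClosure K) a₁)
    (hx₂ : x₂ ^ p - x₂ = algebraMap K (AlgebraicClosure K) a₂)
    (hgal₁ : IsGalois K ↥(IntermediateField.adjoin K {x₁}))
    (hdeg₁ : Module.finrank K ↥(IntermediateField.adjoin K {x₁}) = p)
    (hdeg₂ : Module.finrank K ↥(IntermediateField.adjoin K {x₂}) = p)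
    (hclose : a₁ = a₂ ∨ 1 ≤ V.v (a₁ - a₂)) :
    IntermediateField.adjoin K {x₁} = IntermediateField.adjoin K {x₂} ∧
    ∃ y ∈ IntermediateField.adjoin K {x₁},
      y ^ p - y = algebraMap K (AlgebraicClosure K) a₂ := by
  obtain ⟨y, hy, hy₂⟩ := exists_mem_adjoin_pow_sub_self_eq hcomp hp (Or.inr habs.ge) hx₁ hdeg₁
    (Or.inr ha₁.ge) (hclose.imp_left sub_eq_zero.2)
  have hmin₂ : minpoly K x₂ = X ^ p - X - C a₂ :=
    minpoly_eq_of_finrank_adjoin_eq (monic_X_pow_sub_X_sub_C hp.one_lt a₂) (by simp [hx₂])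
      (by rw [hdeg₂, natDegree_X_pow_sub_X_sub_C hp.one_lt])
  have hint₂ : IsIntegral K x₂ :=
    minpoly.ne_zero_iff.1 (hmin₂ ▸ (monic_X_pow_sub_X_sub_C hp.one_lt a₂).ne_zero)
  have hconj : IsConjRoot K x₂ y := minpoly.eq_of_irreducible_of_monic
    (minpoly.irreducible hint₂) (by simp [hmin₂, hy₂]) (minpoly.monic hint₂)
  have := hgal₁.to_normal
  have := Module.finite_of_finrank_pos (hdeg₁ ▸ hp.pos)
  exact ⟨(eq_of_le_of_finrank_eq (adjoin_simple_le_iff.2 (mem_of_isConjRoot hy hconj))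
    (hdeg₂.trans hdeg₁.symm)).symm, y, hy, hy₂⟩

/-- Let `K` be a complete absolutely unramified discrete valuation field of
characteristic `0` with residue characteristic `p` (an odd prime).  Let `a₁, a₂ ∈ K` with
`v_K a₁ = v_K a₂ = -1`, let `x₁, x₂` be roots of `X^p - X - a₁`, `X^p - X - a₂` in a fixed
algebraic closure, and suppose each `K(xᵢ)/K` is cyclic of degree `p`.  If
`v_K (a₁ - a₂) ≥ 1` then `K(x₁) = K(x₂)`; in particular `K(x₁)` contains a root of
`X^p - X - a₂`. -/
theorem statement1 (p : ℕ) (hp : p.Prime) (hodd : Odd p)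
    (K : Type u) [Field K] [CharZero K]
    (V : AddVal K) (hdisc : V.HasIndex 1) (habs : V.v (p : K) = 1) (hcomp : V.IsComplete)
    (a₁ a₂ : K) (ha₁ : V.v a₁ = -1) (ha₂ : V.v a₂ = -1)
    (x₁ x₂ : AlgebraicClosure K)
    (hx₁ : x₁ ^ p - x₁ = algebraMap K (AlgebraicClosure K) a₁)
    (hx₂ : x₂ ^ p - x₂ = algebraMap K (AlgebraicClosure K) a₂)
    (hgal₁ : IsGalois K ↥(IntermediateField.adjoin K {x₁}))
    (hcyc₁ : IsCyclic (↥(IntermediateField.adjoin K {x₁}) ≃ₐ[K]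
      ↥(IntermediateField.adjoin K {x₁})))
    (hdeg₁ : Module.finrank K ↥(IntermediateField.adjoin K {x₁}) = p)
    (hgal₂ : IsGalois K ↥(IntermediateField.adjoin K {x₂}))
    (hcyc₂ : IsCyclic (↥(IntermediateField.adjoin K {x₂}) ≃ₐ[K]
      ↥(IntermediateField.adjoin K {x₂})))
    (hdeg₂ : Module.finrank K ↥(IntermediateField.adjoin K {x₂}) = p)
    (hclose : a₁ = a₂ ∨ 1 ≤ V.v (a₁ - a₂)) :
    IntermediateField.adjoin K {x₁} = IntermediateField.adjoin K {x₂} ∧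
    ∃ y ∈ IntermediateField.adjoin K {x₁},
      y ^ p - y = algebraMap K (AlgebraicClosure K) a₂ :=
  statement1_general p hp K V habs hcomp a₁ a₂ ha₁ x₁ x₂ hx₁ hx₂ hgal₁ hdeg₁ hdeg₂ hclose
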